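/- For all ν ∈ ℂ with ν ≠ -1/2, ∫_{-1}^{1} P_ν(ξ) P_ν(-ξ) dξ = 2 cos(νπ)/(2ν+1). -/

import Mathlib

/-!
Write `P_ν = (2/π) M[cos((ν + 1/2)·)]`, where
`M f (x) = ∫₀^{arccos x} f β (2 (cos β - x))^{-1/2} dβ`.
In `∫ M f (ξ) M g (-ξ) dξ` integrate over `ξ` first (Fubini): for fixed `(β, γ)` the range of `ξ`
is `(-cos γ, cos β)`, nonempty exactly when `β + γ < π`, and there the kernel integrates to
`½ ∫ₐᵇ ((b - ξ)(ξ - a))^{-1/2} dξ = π/2`, whatever `(β, γ)` is. Hence the integral equals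
`(π/2) ∫_{β, γ > 0, β + γ < π} f β g γ`, and for `f = g = cos(a ·)` the triangle integral is
`π sin(aπ) / (2a)`, by the symmetry `β ↦ π - β` of the remaining one-dimensional integral.
-/

open Filter MeasureTheory Real

/-- Legendre function of the first kind of complex degree `ν` on `(-1, 1)`,
defined via the Mehler--Dirichlet integral. -/
noncomputable def legendreP (ν : ℂ) (x : ℝ) : ℂ :=
  (2 / (π : ℂ)) * ∫ β in (0 : ℝ)..(Real.arccos x),
    Complex.cos ((2 * ν + 1) * (β : ℂ) / 2) / ((Real.sqrt (2 * (Real.cos β - x)) : ℝ) : ℂ)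

open Set

section InverseSqrt

variable {a b : ℝ}

lemma hasDerivAt_arcsin_affine {x : ℝ} (hx : x ∈ Ioo a b) :
    HasDerivAt (fun t => arcsin ((2 * t - a - b) / (b - a)))
      ((√(b - x))⁻¹ * (√(x - a))⁻¹) x := by
  obtain ⟨hax, hxb⟩ := hx
  have hba : 0 < b - a := by linarith
  have hu : HasDerivAt (fun t : ℝ => (2 * t - a - b) / (b - a)) (2 / (b - a)) x := by
    simpa using ((((hasDerivAt_id x).const_mul 2).sub_const a).sub_const b).div_const (b - a)
  have hu_lt : (2 * x - a - b) / (b - a) < 1 := by rw [div_lt_one hba]; linarith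
  have lt_hu : -1 < (2 * x - a - b) / (b - a) := by rw [lt_div_iff₀ hba]; linarith
  refine ((hasDerivAt_arcsin lt_hu.ne' hu_lt.ne).comp x hu).congr_deriv ?_
  have hsq : 1 - ((2 * x - a - b) / (b - a)) ^ 2 = (2 * √(b - x) * √(x - a) / (b - a)) ^ 2 := by
    field_simp
    rw [Real.sq_sqrt (by linarith), Real.sq_sqrt (by linarith)]
    ring
  have h₁ : √(b - x) ≠ 0 := (Real.sqrt_pos.2 (by linarith)).ne'
  have h₂ : √(x - a) ≠ 0 := (Real.sqrt_pos.2 (by linarith)).ne'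
  rw [hsq, Real.sqrt_sq (by positivity)]
  field_simp

lemma integrableOn_inv_sqrt_mul_inv_sqrt :
    IntegrableOn (fun t => (√(b - t))⁻¹ * (√(t - a))⁻¹) (Ioo a b) :=
  (intervalIntegral.integrableOn_deriv_of_nonneg
    (Real.continuous_arcsin.comp (by fun_prop)).continuousOn
    (fun _ hx => hasDerivAt_arcsin_affine hx) (fun _ _ => by positivity)).mono_set
    Ioo_subset_Ioc_self

lemma integral_inv_sqrt_mul_inv_sqrt (hab : a < b) :
    ∫ t in Ioo a b, (√(b - t))⁻¹ * (√(t - a))⁻¹ = π := by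
  rw [← integral_Ioc_eq_integral_Ioo, ← intervalIntegral.integral_of_le hab.le,
    intervalIntegral.integral_eq_sub_of_hasDerivAt_of_le hab.le
      (Real.continuous_arcsin.comp (by fun_prop)).continuousOn
      (fun _ hx => hasDerivAt_arcsin_affine hx)
      ((intervalIntegrable_iff_integrableOn_Ioo_of_le hab.le).2
        integrableOn_inv_sqrt_mul_inv_sqrt)]
  have hba : b - a ≠ 0 := by linarith
  have h₁ : (2 * b - a - b) / (b - a) = 1 := by field_simp; ring
  have h₂ : (2 * a - a - b) / (b - a) = -1 := by field_simp; ring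
  simp only [Function.comp_apply, h₁, h₂, arcsin_one, arcsin_neg_one]
  ring

end InverseSqrt

lemma mem_Ioo_arccos_iff {x β : ℝ} : β ∈ Ioo 0 (arccos x) ↔ β ∈ Ioo 0 π ∧ x < cos β := by
  constructor
  · rintro ⟨hβ, hβx⟩
    have hβπ : β ∈ Ioo 0 π := ⟨hβ, hβx.trans_le (arccos_le_pi x)⟩
    refine ⟨hβπ, ?_⟩
    rcases le_or_gt x (-1) with hx | hx
    · have := strictAntiOn_cos ⟨hβ.le, hβπ.2.le⟩ ⟨pi_pos.le, le_rfl⟩ hβπ.2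
      rw [cos_pi] at this
      linarith
    · have hx1 : x < 1 := arccos_pos.1 (hβ.trans hβx)
      rw [← cos_arccos hx.le hx1.le]
      exact strictAntiOn_cos ⟨hβ.le, hβπ.2.le⟩ ⟨arccos_nonneg x, arccos_le_pi x⟩ hβx
  · rintro ⟨⟨hβ, hβπ⟩, hxβ⟩
    refine ⟨hβ, ?_⟩
    rcases le_or_gt x (-1) with hx | hx
    · rwa [arccos_eq_pi.2 hx]
    · have hx1 : x < 1 := hxβ.trans_le (cos_le_one β)
      rw [← cos_arccos hx.le hx1.le] at hxβ
      exact (strictAntiOn_cos.lt_iff_gt ⟨arccos_nonneg x, arccos_le_pi x⟩ ⟨hβ.le, hβπ.le⟩).1 hxβ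

lemma neg_cos_lt_cos_iff {β γ : ℝ} (hβ : β ∈ Icc 0 π) (hγ : γ ∈ Icc 0 π) :
    -cos γ < cos β ↔ β + γ < π := by
  rw [← cos_pi_sub, strictAntiOn_cos.lt_iff_gt ⟨by linarith [hγ.2], by linarith [hγ.1]⟩ hβ]
  constructor <;> intro h <;> linarith

def piTriangle : Set (ℝ × ℝ) := {p | 0 < p.1 ∧ 0 < p.2 ∧ p.1 + p.2 < π}

lemma isOpen_piTriangle : IsOpen piTriangle :=
  (isOpen_lt continuous_const continuous_fst).inter
    ((isOpen_lt continuous_const continuous_snd).inter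
      (isOpen_lt (continuous_fst.add continuous_snd) continuous_const))

lemma piTriangle_subset_Icc_prod_Icc : piTriangle ⊆ Icc 0 π ×ˢ Icc 0 π :=
  fun _ ⟨h₁, h₂, h₃⟩ => ⟨⟨h₁.le, by linarith⟩, ⟨h₂.le, by linarith⟩⟩

lemma Continuous.integrableOn_piTriangle {E : Type*} [NormedAddCommGroup E] {h : ℝ × ℝ → E}
    (hh : Continuous h) : IntegrableOn h piTriangle :=
  (hh.continuousOn.integrableOn_compact (isCompact_Icc.prod isCompact_Icc)).mono_set
    piTriangle_subset_Icc_prod_Icc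

noncomputable def mehlerIntegral (f : ℝ → ℂ) (x : ℝ) : ℂ :=
  ∫ β in (0 : ℝ)..arccos x, f β / ((√(2 * (cos β - x)) : ℝ) : ℂ)

lemma mehlerIntegral_of_one_le (f : ℝ → ℂ) {x : ℝ} (hx : 1 ≤ x) : mehlerIntegral f x = 0 := by
  simp [mehlerIntegral, arccos_eq_zero.2 hx]

noncomputable def mehlerWeight (x β : ℝ) : ℝ := (√(2 * (cos β - x)))⁻¹

lemma mehlerWeight_mul_mehlerWeight_neg (ξ β γ : ℝ) :
    mehlerWeight ξ β * mehlerWeight (-ξ) γ = 2⁻¹ * ((√(cos β - ξ))⁻¹ * (√(ξ - -cos γ))⁻¹) := by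
  have h2 : (√2)⁻¹ * (√2)⁻¹ = (2 : ℝ)⁻¹ := by rw [← mul_inv, mul_self_sqrt zero_le_two]
  simp only [mehlerWeight, Real.sqrt_mul zero_le_two, mul_inv, sub_neg_eq_add, add_comm ξ]
  linear_combination (√(cos β - ξ))⁻¹ * (√(cos γ + ξ))⁻¹ * h2

def mehlerDomain : Set (ℝ × ℝ × ℝ) :=
  {q | q.2 ∈ Ioo 0 (arccos q.1) ×ˢ Ioo 0 (arccos (-q.1))}

lemma mem_mehlerDomain_iff {ξ : ℝ} {p : ℝ × ℝ} :
    (ξ, p) ∈ mehlerDomain ↔ p ∈ piTriangle ∧ ξ ∈ Ioo (-cos p.2) (cos p.1) := by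
  obtain ⟨β, γ⟩ := p
  change (β ∈ Ioo 0 (arccos ξ) ∧ γ ∈ Ioo 0 (arccos (-ξ))) ↔ _
  rw [mem_Ioo_arccos_iff, mem_Ioo_arccos_iff]
  simp only [piTriangle, mem_Ioo, mem_ofPred_eq]
  constructor
  · rintro ⟨⟨⟨hβ, hβπ⟩, hξβ⟩, ⟨hγ, hγπ⟩, hξγ⟩
    refine ⟨⟨hβ, hγ, ?_⟩, by linarith, hξβ⟩
    exact (neg_cos_lt_cos_iff ⟨hβ.le, hβπ.le⟩ ⟨hγ.le, hγπ.le⟩).1 (by linarith)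
  · rintro ⟨⟨hβ, hγ, hβγ⟩, hγξ, hξβ⟩
    exact ⟨⟨⟨hβ, by linarith⟩, hξβ⟩, ⟨hγ, by linarith⟩, by linarith⟩

lemma isOpen_mehlerDomain : IsOpen mehlerDomain := by
  simp only [mehlerDomain, mem_prod, mem_Ioo, ofPred_and]
  refine ((isOpen_lt ?_ ?_).inter (isOpen_lt ?_ ?_)).inter
    ((isOpen_lt ?_ ?_).inter (isOpen_lt ?_ ?_)) <;> fun_prop

noncomputable def mehlerKernel : ℝ × ℝ × ℝ → ℝ :=
  mehlerDomain.indicator fun q => mehlerWeight q.1 q.2.1 * mehlerWeight (-q.1) q.2.2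

lemma measurable_mehlerKernel : Measurable mehlerKernel :=
  Measurable.indicator (by unfold mehlerWeight; fun_prop) isOpen_mehlerDomain.measurableSet

lemma mehlerKernel_nonneg (q : ℝ × ℝ × ℝ) : 0 ≤ mehlerKernel q :=
  indicator_nonneg (fun _ _ => by unfold mehlerWeight; positivity) q

lemma mehlerKernel_section_of_mem {p : ℝ × ℝ} (hp : p ∈ piTriangle) :
    (fun ξ => mehlerKernel (ξ, p)) =
      (Ioo (-cos p.2) (cos p.1)).indicator
        fun ξ => mehlerWeight ξ p.1 * mehlerWeight (-ξ) p.2 := by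
  ext ξ
  simp only [mehlerKernel, indicator, mem_mehlerDomain_iff, hp, true_and]

lemma mehlerKernel_section_of_notMem {p : ℝ × ℝ} (hp : p ∉ piTriangle) :
    (fun ξ => mehlerKernel (ξ, p)) = 0 := by
  ext ξ
  simp [mehlerKernel, mem_mehlerDomain_iff, hp]

lemma integrable_mehlerKernel_section (p : ℝ × ℝ) : Integrable fun ξ => mehlerKernel (ξ, p) := by
  by_cases hp : p ∈ piTriangle
  · rw [mehlerKernel_section_of_mem hp, integrable_indicator_iff measurableSet_Ioo]
    simp_rw [mehlerWeight_mul_mehlerWeight_neg]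
    exact integrableOn_inv_sqrt_mul_inv_sqrt.const_mul _
  · rw [mehlerKernel_section_of_notMem hp]
    exact integrable_zero _ _ _

lemma integral_mehlerKernel_section (p : ℝ × ℝ) :
    ∫ ξ, mehlerKernel (ξ, p) = piTriangle.indicator (fun _ => π / 2) p := by
  by_cases hp : p ∈ piTriangle
  · obtain ⟨hβ, hγ⟩ := piTriangle_subset_Icc_prod_Icc hp
    have hlt : -cos p.2 < cos p.1 := (neg_cos_lt_cos_iff hβ hγ).2 hp.2.2
    rw [mehlerKernel_section_of_mem hp, integral_indicator measurableSet_Ioo, indicator_of_mem hp]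
    simp_rw [mehlerWeight_mul_mehlerWeight_neg]
    rw [integral_const_mul, integral_inv_sqrt_mul_inv_sqrt hlt]
    ring
  · rw [mehlerKernel_section_of_notMem hp, indicator_of_notMem hp]
    simp

lemma integral_mul_mehlerKernel_section (h : ℝ × ℝ → ℂ) (p : ℝ × ℝ) :
    ∫ ξ, h p * mehlerKernel (ξ, p) = piTriangle.indicator (fun p => π / 2 * h p) p := by
  rw [integral_const_mul, integral_complex_ofReal, integral_mehlerKernel_section]
  by_cases hp : p ∈ piTriangle
  · simp only [indicator_of_mem hp]
    push_cast
    ring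
  · simp [indicator_of_notMem hp]

lemma integrable_mul_mehlerKernel {h : ℝ × ℝ → ℂ} (hh : IntegrableOn h piTriangle) :
    Integrable fun q : ℝ × ℝ × ℝ => h q.2 * mehlerKernel q := by
  have hT := isOpen_piTriangle.measurableSet
  have hsupp : (fun q : ℝ × ℝ × ℝ => h q.2 * mehlerKernel q) =
      fun q => piTriangle.indicator h q.2 * mehlerKernel q := by
    ext ⟨ξ, p⟩
    by_cases hp : p ∈ piTriangle
    · rw [indicator_of_mem hp]
    · simp [congrFun (mehlerKernel_section_of_notMem hp) ξ]
  rw [hsupp, Measure.volume_eq_prod, integrable_prod_iff']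
  · refine ⟨.of_forall fun p =>
      (integrable_mehlerKernel_section p).ofReal.const_mul (piTriangle.indicator h p), ?_⟩
    simp_rw [norm_mul, Complex.norm_real, norm_of_nonneg (mehlerKernel_nonneg _),
      integral_const_mul, integral_mehlerKernel_section]
    refine ((hh.integrable_indicator hT).norm.const_mul (π / 2)).congr (.of_forall fun p => ?_)
    by_cases hp : p ∈ piTriangle
    · simp only [indicator_of_mem hp]
      ring
    · simp [indicator_of_notMem hp]
  · exact (hh.integrable_indicator hT).aestronglyMeasurable.comp_snd.mul
      (Complex.continuous_ofReal.measurable.comp measurable_mehlerKernel).aestronglyMeasurable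

lemma mehlerIntegral_eq_setIntegral (f : ℝ → ℂ) (x : ℝ) :
    mehlerIntegral f x = ∫ β in Ioo 0 (arccos x), f β * mehlerWeight x β := by
  rw [mehlerIntegral, intervalIntegral.integral_of_le (arccos_nonneg x),
    integral_Ioc_eq_integral_Ioo]
  simp [mehlerWeight, div_eq_mul_inv]

lemma mehlerIntegral_mul_mehlerIntegral_neg (f g : ℝ → ℂ) (ξ : ℝ) :
    mehlerIntegral f ξ * mehlerIntegral g (-ξ) = ∫ p, f p.1 * g p.2 * mehlerKernel (ξ, p) := by
  rw [mehlerIntegral_eq_setIntegral, mehlerIntegral_eq_setIntegral, ← setIntegral_prod_mul,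
    ← Measure.volume_eq_prod, ← integral_indicator (measurableSet_Ioo.prod measurableSet_Ioo)]
  congr 1
  ext p
  by_cases hp : p ∈ Ioo 0 (arccos ξ) ×ˢ Ioo 0 (arccos (-ξ))
  · have hq : (ξ, p) ∈ mehlerDomain := hp
    simp only [indicator_of_mem hp, mehlerKernel, indicator_of_mem hq]
    push_cast
    ring
  · have hq : (ξ, p) ∉ mehlerDomain := hp
    simp [indicator_of_notMem hp, mehlerKernel, indicator_of_notMem hq]

theorem integral_mehlerIntegral_mul_mehlerIntegral_neg {f g : ℝ → ℂ}
    (hfg : IntegrableOn (fun p : ℝ × ℝ => f p.1 * g p.2) piTriangle) :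
    ∫ ξ in (-1 : ℝ)..1, mehlerIntegral f ξ * mehlerIntegral g (-ξ) =
      π / 2 * ∫ p in piTriangle, f p.1 * g p.2 := by
  have hsupp : ∀ ξ ∉ Ioc (-1 : ℝ) 1, mehlerIntegral f ξ * mehlerIntegral g (-ξ) = 0 := by
    intro ξ hξ
    rcases le_or_gt ξ (-1) with h | h
    · rw [mehlerIntegral_of_one_le g (by linarith), mul_zero]
    · rw [mehlerIntegral_of_one_le f (not_le.1 fun h' => hξ ⟨h, h'⟩).le, zero_mul]
  calc ∫ ξ in (-1 : ℝ)..1, mehlerIntegral f ξ * mehlerIntegral g (-ξ)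
      = ∫ ξ, ∫ p, f p.1 * g p.2 * mehlerKernel (ξ, p) := by
        rw [intervalIntegral.integral_of_le (by norm_num),
          setIntegral_eq_integral_of_forall_compl_eq_zero hsupp]
        simp_rw [mehlerIntegral_mul_mehlerIntegral_neg]
    _ = ∫ p, ∫ ξ, f p.1 * g p.2 * mehlerKernel (ξ, p) :=
        integral_integral_swap
          (by rw [← Measure.volume_eq_prod]; exact integrable_mul_mehlerKernel hfg)
    _ = ∫ p in piTriangle, π / 2 * (f p.1 * g p.2) := by
        simp_rw [integral_mul_mehlerKernel_section (fun p => f p.1 * g p.2)]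
        exact integral_indicator isOpen_piTriangle.measurableSet
    _ = π / 2 * ∫ p in piTriangle, f p.1 * g p.2 := integral_const_mul _ _

lemma setIntegral_piTriangle {E : Type*} [NormedAddCommGroup E] [NormedSpace ℝ E]
    {h : ℝ × ℝ → E} (hh : IntegrableOn h piTriangle) :
    ∫ p in piTriangle, h p = ∫ β in (0 : ℝ)..π, ∫ γ in (0 : ℝ)..(π - β), h (β, γ) := by
  have hT := isOpen_piTriangle.measurableSet
  have hsection : ∀ β, ∫ γ, piTriangle.indicator h (β, γ) =
      (Ioc 0 π).indicator (fun β => ∫ γ in (0 : ℝ)..(π - β), h (β, γ)) β := by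
    intro β
    by_cases hβ : β ∈ Ioc 0 π
    · have hmem : ∀ γ, (β, γ) ∈ piTriangle ↔ γ ∈ Ioo 0 (π - β) := fun γ => by
        simp only [piTriangle, mem_ofPred_eq, mem_Ioo, hβ.1, true_and]
        constructor <;> rintro ⟨h₁, h₂⟩ <;> exact ⟨h₁, by linarith⟩
      rw [indicator_of_mem hβ, intervalIntegral.integral_of_le (by linarith [hβ.2]),
        integral_Ioc_eq_integral_Ioo, ← integral_indicator measurableSet_Ioo]
      congr 1
      ext γ
      simp only [indicator, hmem]
    · have hnot : ∀ γ, (β, γ) ∉ piTriangle := fun γ ⟨h₁, h₂, h₃⟩ => hβ ⟨h₁, by linarith⟩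
      simp [indicator_of_notMem hβ, indicator_of_notMem (hnot _)]
  rw [← integral_indicator hT, Measure.volume_eq_prod, integral_prod _ (hh.integrable_indicator hT)]
  simp_rw [hsection]
  rw [integral_indicator measurableSet_Ioc, intervalIntegral.integral_of_le pi_pos.le]

lemma integral_cos_mul_sin_mul_pi_sub (a : ℂ) :
    ∫ β in (0 : ℝ)..π, Complex.cos (a * β) * Complex.sin (a * (π - β)) =
      π / 2 * Complex.sin (a * π) := by
  set φ : ℝ → ℂ := fun β => Complex.cos (a * β) * Complex.sin (a * (π - β))
  have hφ : Continuous φ := by fun_prop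
  have hsym : ∀ β : ℝ, φ β + φ (π - β) = Complex.sin (a * π) := by
    intro β
    simp only [φ]
    push_cast
    rw [sub_sub_cancel, show a * (π : ℂ) = a * (π - β) + a * β by ring, Complex.sin_add]
    ring
  have hrefl : ∫ β in (0 : ℝ)..π, φ (π - β) = ∫ β in (0 : ℝ)..π, φ β := by
    rw [intervalIntegral.integral_comp_sub_left]
    simp
  have htwice : 2 * ∫ β in (0 : ℝ)..π, φ β = π * Complex.sin (a * π) := by
    calc 2 * ∫ β in (0 : ℝ)..π, φ β
        = (∫ β in (0 : ℝ)..π, φ β) + ∫ β in (0 : ℝ)..π, φ (π - β) := by rw [hrefl]; ring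
      _ = ∫ β in (0 : ℝ)..π, (φ β + φ (π - β)) :=
        (intervalIntegral.integral_add (hφ.intervalIntegrable _ _)
          ((hφ.comp (continuous_sub_left π)).intervalIntegrable _ _)).symm
      _ = π * Complex.sin (a * π) := by simp [hsym]
  linear_combination htwice / 2

lemma integral_piTriangle_cos_mul_cos {a : ℂ} (ha : a ≠ 0) :
    ∫ p in piTriangle, Complex.cos (a * p.1) * Complex.cos (a * p.2) =
      π / (2 * a) * Complex.sin (a * π) := by
  have hinner : ∀ β : ℝ, ∫ γ in (0 : ℝ)..(π - β), Complex.cos (a * β) * Complex.cos (a * γ) =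
      Complex.cos (a * β) * Complex.sin (a * (π - β)) / a := by
    intro β
    rw [intervalIntegral.integral_const_mul, integral_cos_mul_complex ha]
    push_cast
    simp only [mul_zero, Complex.sin_zero, zero_div, sub_zero]
    ring
  rw [setIntegral_piTriangle (by fun_prop : Continuous _).integrableOn_piTriangle]
  simp_rw [hinner, intervalIntegral.integral_div, integral_cos_mul_sin_mul_pi_sub]
  field_simp

lemma legendreP_eq_mehlerIntegral (ν : ℂ) (x : ℝ) :
    legendreP ν x = 2 / π * mehlerIntegral (fun β => Complex.cos ((ν + 1 / 2) * β)) x := by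
  unfold legendreP mehlerIntegral
  congr 1
  refine intervalIntegral.integral_congr fun β _ => ?_
  congr 2
  ring

theorem int_P_Pneg (ν : ℂ) (hν : ν ≠ -1/2) :
    ∫ ξ in (-1 : ℝ)..1, legendreP ν ξ * legendreP ν (-ξ)
      = 2 * Complex.cos (ν * π) / (2 * ν + 1) := by
  have ha : ν + 1 / 2 ≠ 0 := fun h => hν (by linear_combination h)
  set c : ℝ → ℂ := fun β => Complex.cos ((ν + 1 / 2) * β)
  calc ∫ ξ in (-1 : ℝ)..1, legendreP ν ξ * legendreP ν (-ξ)
      = (2 / π) ^ 2 * ∫ ξ in (-1 : ℝ)..1, mehlerIntegral c ξ * mehlerIntegral c (-ξ) := by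
        have hP : ∀ x, legendreP ν x = 2 / π * mehlerIntegral c x := legendreP_eq_mehlerIntegral ν
        simp_rw [hP, ← intervalIntegral.integral_const_mul]
        ring_nf
    _ = (2 / π) ^ 2 * (π / 2 * (π / (2 * (ν + 1 / 2)) * Complex.sin ((ν + 1 / 2) * π))) := by
        rw [integral_mehlerIntegral_mul_mehlerIntegral_neg
          (by fun_prop : Continuous fun p : ℝ × ℝ => c p.1 * c p.2).integrableOn_piTriangle,
          integral_piTriangle_cos_mul_cos ha]
    _ = 2 * Complex.cos (ν * π) / (2 * ν + 1) := by
        rw [add_mul, one_div_mul_eq_div, Complex.sin_add_pi_div_two]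
        field_simp
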